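/- In the power series ring R = k(v)[[T-1]], for a positive integer r, the element [r]! [T;r]_{(r)}^{-1} is congruent to 1 + (r - (2/(v-v^{-1})) ∑_{k=1}^{r} v^k/[k]) (T-1) modulo (T-1)^2. -/

import Mathlib

noncomputable section

open Finset

/-- The field `ℚ(v)` of rational functions, with `v` an indeterminate. -/
abbrev Fv : Type := RatFunc ℚ

/-- The indeterminate `v`. -/
def vv : Fv := RatFunc.X

/-- Quantum integer `[m] = (v^m - v^{-m})/(v - v^{-1})`. -/
def qint (m : ℤ) : Fv := (vv ^ m - vv ^ (-m)) / (vv - vv⁻¹)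

/-- Quantum factorial `[n]! = [n][n-1]⋯[1]`, with `[0]! = 1`. -/
def qfact (n : ℕ) : Fv := ∏ i ∈ Finset.range n, qint (i + 1)

/-- Falling quantum factorial `[m]_{(j)} = [m][m-1]⋯[m-j+1]`, defined for any integer `m`. -/
def qfall (m : ℤ) (j : ℕ) : Fv := ∏ i ∈ Finset.range j, qint (m - i)

/-- Quantum binomial coefficient `[m choose j] = [m]_{(j)}/[j]!`, for any integer `m`. -/
def qbinom (m : ℤ) (j : ℕ) : Fv := qfall m j / qfact j


/-- The power series ring `R = k(v)[[T-1]]`, realized as power series in `X = T - 1`. -/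
abbrev Rr : Type := PowerSeries Fv

/-- The element `T = 1 + (T-1)` of `R`; it is invertible since its constant term is `1`. -/
def TT : Rr := 1 + PowerSeries.X

/-- `[T; j] = (v^j T - v^{-j} T^{-1})/(v - v^{-1})` in `R`. -/
def bTp (j : ℤ) : Rr :=
  ((PowerSeries.C : Fv →+* Rr) (vv ^ j) * TT - (PowerSeries.C : Fv →+* Rr) (vv ^ (-j)) * TT⁻¹) *
    (PowerSeries.C : Fv →+* Rr) (vv - vv⁻¹)⁻¹

lemma vv_ne_zero : (vv : Fv) ≠ 0 := RatFunc.X_ne_zero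

lemma vv_pow_ne_one (n : ℕ) (hn : n ≠ 0) : (vv : Fv) ^ n ≠ 1 := by
  intro h
  have h2 : (Polynomial.X : Polynomial ℚ) ^ n = 1 := by
    apply IsFractionRing.injective (Polynomial ℚ) (RatFunc ℚ)
    simpa [map_pow, RatFunc.algebraMap_X, vv] using h
  have := congrArg Polynomial.natDegree h2
  simp [Polynomial.natDegree_X_pow] at this
  exact hn this

lemma sub_inv_ne_zero : (vv : Fv) - vv⁻¹ ≠ 0 := by
  intro h
  have h1 : (vv : Fv) = vv⁻¹ := sub_eq_zero.mp h
  have h2 : (vv : Fv) ^ 2 = 1 := by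
    rw [pow_two]; nth_rewrite 2 [h1]; exact mul_inv_cancel₀ vv_ne_zero
  exact vv_pow_ne_one 2 (by norm_num) h2

lemma pow_sub_inv_ne_zero (m : ℕ) (hm : m ≠ 0) : (vv : Fv) ^ m - ((vv : Fv) ^ m)⁻¹ ≠ 0 := by
  intro h
  have h1 : (vv : Fv) ^ m = (vv ^ m)⁻¹ := sub_eq_zero.mp h
  have h2 : (vv : Fv) ^ (2 * m) = 1 := by
    rw [two_mul, pow_add]; nth_rewrite 2 [h1]
    exact mul_inv_cancel₀ (pow_ne_zero m vv_ne_zero)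
  exact vv_pow_ne_one (2 * m) (by omega) h2

lemma qint_natCast (m : ℕ) : qint (m : ℤ) = ((vv : Fv) ^ m - (vv ^ m)⁻¹) / (vv - vv⁻¹) := by
  simp [qint, zpow_natCast, zpow_neg]

lemma qint_ne_zero (m : ℕ) (hm : m ≠ 0) : qint (m : ℤ) ≠ 0 := by
  rw [qint_natCast]
  exact div_ne_zero (pow_sub_inv_ne_zero m hm) sub_inv_ne_zero

def ee (j : ℤ) : Fv := (vv ^ j + vv ^ (-j)) / (vv - vv⁻¹)

lemma TT_mul_inv : (TT : Rr) * TT⁻¹ = 1 := by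
  apply PowerSeries.mul_inv_cancel
  simp [TT]

lemma TT_inv_eq : (TT : Rr)⁻¹ = (1 - PowerSeries.X) + PowerSeries.X ^ 2 * TT⁻¹ := by
  have h : (1 + PowerSeries.X) * (TT : Rr)⁻¹ = 1 := by rw [show (1 + PowerSeries.X : Rr) = TT from rfl]; exact TT_mul_inv
  linear_combination (1 - (PowerSeries.X : Rr)) * h

lemma bTp_mod (j : ℤ) : (PowerSeries.X : Rr) ^ 2 ∣
    bTp j - ((PowerSeries.C : Fv →+* Rr) (qint j) + (PowerSeries.C : Fv →+* Rr) (ee j) * PowerSeries.X) := by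
  refine ⟨-((PowerSeries.C : Fv →+* Rr) (vv ^ (-j) * (vv - vv⁻¹)⁻¹) * TT⁻¹), ?_⟩
  rw [bTp]
  nth_rewrite 1 [TT_inv_eq]
  simp only [qint, ee, div_eq_mul_inv, map_mul, map_sub, map_add, TT]
  ring

lemma sum_reflect (F : ℤ → Fv) (n : ℕ) :
    ∑ i ∈ range n, F ((n : ℤ) - i) = ∑ i ∈ range n, F (i + 1) := by
  induction n with
  | zero => simp
  | succ n ih =>
    push_cast
    rw [Finset.sum_range_succ' (fun i => F (((n : ℕ) : ℤ) + 1 - i)), Finset.sum_range_succ]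
    push_cast
    rw [sub_zero, ← ih]
    congr 1
    apply Finset.sum_congr rfl
    intro i _
    congr 1
    push_cast
    ring

lemma prod_reflect (F : ℤ → Fv) (n : ℕ) :
    ∏ i ∈ range n, F ((n : ℤ) - i) = ∏ i ∈ range n, F (i + 1) := by
  induction n with
  | zero => simp
  | succ n ih =>
    push_cast
    rw [Finset.prod_range_succ' (fun i => F (((n : ℕ) : ℤ) + 1 - i)), Finset.prod_range_succ]
    push_cast
    rw [sub_zero, ← ih]
    congr 1
    apply Finset.prod_congr rfl
    intro i _
    congr 1
    push_cast
    ring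


lemma prod_mod (r n : ℕ) (hn : n ≤ r) : (PowerSeries.X : Rr) ^ 2 ∣
    (∏ i ∈ range n, bTp ((r : ℤ) - i)) -
      (PowerSeries.C : Fv →+* Rr) (∏ i ∈ range n, qint ((r : ℤ) - i)) *
        (1 + (PowerSeries.C : Fv →+* Rr) (∑ i ∈ range n, ee ((r : ℤ) - i) / qint ((r : ℤ) - i)) *
          PowerSeries.X) := by
  induction n with
  | zero => simp
  | succ n ih =>
    have hn' : n ≤ r := by omega
    obtain ⟨u, hu⟩ := ih hn'
    obtain ⟨w, hw⟩ := bTp_mod ((r : ℤ) - n)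
    have hu' : (∏ i ∈ range n, bTp ((r : ℤ) - i)) =
        (PowerSeries.C : Fv →+* Rr) (∏ i ∈ range n, qint ((r : ℤ) - i)) *
          (1 + (PowerSeries.C : Fv →+* Rr) (∑ i ∈ range n, ee ((r : ℤ) - i) / qint ((r : ℤ) - i)) *
            PowerSeries.X) + PowerSeries.X ^ 2 * u := by linear_combination hu
    have hw' : bTp ((r : ℤ) - n) = (PowerSeries.C : Fv →+* Rr) (qint ((r : ℤ) - n)) +
        (PowerSeries.C : Fv →+* Rr) (ee ((r : ℤ) - n)) * PowerSeries.X + PowerSeries.X ^ 2 * w := by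
      linear_combination hw
    have hq : qint ((r : ℤ) - n) ≠ 0 := by
      rw [show ((r : ℤ) - n) = ((r - n : ℕ) : ℤ) by push_cast [Nat.cast_sub hn']; ring]
      exact qint_ne_zero (r - n) (by omega)
    set P := ∏ i ∈ range n, qint ((r : ℤ) - i) with hP
    set S := ∑ i ∈ range n, ee ((r : ℤ) - i) / qint ((r : ℤ) - i) with hS
    set q := qint ((r : ℤ) - n) with hqe
    set e := ee ((r : ℤ) - n) with hee
    rw [Finset.prod_range_succ, Finset.prod_range_succ, Finset.sum_range_succ, hu', hw',
      ← hP, ← hS, ← hqe, ← hee]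
    have h3 : (PowerSeries.C : Fv →+* Rr) q * (PowerSeries.C : Fv →+* Rr) (e / q) = (PowerSeries.C : Fv →+* Rr) e := by
      rw [← map_mul, mul_div_cancel₀ e hq]
    refine ⟨(PowerSeries.C : Fv →+* Rr) P * (PowerSeries.C : Fv →+* Rr) S * (PowerSeries.C : Fv →+* Rr) e +
      (PowerSeries.C : Fv →+* Rr) P * (1 + (PowerSeries.C : Fv →+* Rr) S * PowerSeries.X) * w +
      u * ((PowerSeries.C : Fv →+* Rr) q + (PowerSeries.C : Fv →+* Rr) e * PowerSeries.X + PowerSeries.X ^ 2 * w), ?_⟩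
    simp only [map_mul, map_add]
    linear_combination (-((PowerSeries.C : Fv →+* Rr) P * PowerSeries.X)) * h3

lemma term_eq (m : ℕ) (hm : m ≠ 0) :
    ee (m : ℤ) / qint (m : ℤ) = 2 / (vv - vv⁻¹) * (vv ^ m / qint (m : ℤ)) - 1 := by
  have h1 : qint (m : ℤ) = ((vv : Fv) ^ m - (vv ^ m)⁻¹) / (vv - vv⁻¹) := by
    simp [qint, zpow_natCast, zpow_neg]
  have h2 : ee (m : ℤ) = ((vv : Fv) ^ m + (vv ^ m)⁻¹) / (vv - vv⁻¹) := by
    simp [ee, zpow_natCast, zpow_neg]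
  have hv := vv_ne_zero
  have hp : (vv : Fv) ^ m ≠ 0 := pow_ne_zero m hv
  have hd := sub_inv_ne_zero
  have hn := pow_sub_inv_ne_zero m hm
  have hq : qint (m : ℤ) ≠ 0 := qint_ne_zero m hm
  have key : ee (m : ℤ) = 2 / (vv - vv⁻¹) * vv ^ m - qint (m : ℤ) := by
    rw [h1, h2]
    ring
  rw [key, sub_div, div_self hq, mul_div_assoc]

/-- In `R = k(v)[[T-1]]`, for `r ≥ 1`,
`[r]! [T;r]_{(r)}⁻¹ ≡ 1 + (r - (2/(v-v⁻¹)) ∑_{k=1}^r v^k/[k]) (T-1)  mod (T-1)²`. -/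
theorem matrix_entry_congruence (r : ℕ) (hr : 1 ≤ r) :
    (PowerSeries.C : Fv →+* Rr) (qfact r) * (∏ i ∈ Finset.range r, bTp ((r : ℤ) - i))⁻¹ -
        (1 + (PowerSeries.C : Fv →+* Rr)
              ((r : Fv) - 2 / (vv - vv⁻¹) * ∑ k ∈ Finset.range r, vv ^ (k + 1) / qint (k + 1)) *
            PowerSeries.X) ∈
      Ideal.span {(PowerSeries.X : Rr) ^ 2} := by
  rw [Ideal.mem_span_singleton]
  set S : Fv := ∑ i ∈ range r, ee ((r : ℤ) - i) / qint ((r : ℤ) - i) with hS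
  have hprod : (∏ i ∈ range r, qint ((r : ℤ) - i)) = qfact r := by
    rw [prod_reflect qint r]; rfl
  have hSalt : S = ∑ k ∈ range r, ee ((k : ℤ) + 1) / qint ((k : ℤ) + 1) := by
    rw [hS, sum_reflect (fun j => ee j / qint j) r]
  have ha : ((r : Fv) - 2 / (vv - vv⁻¹) * ∑ k ∈ Finset.range r, vv ^ (k + 1) / qint (k + 1)) =
      -S := by
    rw [hSalt]
    have : ∀ k ∈ range r, ee ((k : ℤ) + 1) / qint ((k : ℤ) + 1) =
        2 / (vv - vv⁻¹) * (vv ^ (k + 1) / qint ((k : ℤ) + 1)) - 1 := by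
      intro k _
      have := term_eq (k + 1) (by omega)
      push_cast at this ⊢
      exact this
    rw [Finset.sum_congr rfl this, Finset.sum_sub_distrib, ← Finset.mul_sum]
    simp only [Finset.sum_const, Finset.card_range, nsmul_eq_mul, mul_one]
    ring
  have hq : qfact r ≠ 0 := by
    rw [show qfact r = ∏ i ∈ range r, qint ((i : ℤ) + 1) from rfl]
    rw [Finset.prod_ne_zero_iff]
    intro i _
    have := qint_ne_zero (i + 1) (by omega)
    push_cast at this
    exact this
  obtain ⟨u, hu⟩ := prod_mod r r le_rfl
  rw [hprod, ← hS] at hu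
  have hu' : (∏ i ∈ range r, bTp ((r : ℤ) - i)) =
      (PowerSeries.C : Fv →+* Rr) (qfact r) * (1 + (PowerSeries.C : Fv →+* Rr) S * PowerSeries.X) +
        PowerSeries.X ^ 2 * u := by linear_combination hu
  have hconst : (PowerSeries.constantCoeff : Rr →+* Fv) (∏ i ∈ range r, bTp ((r : ℤ) - i)) = qfact r := by
    have := congrArg ((PowerSeries.constantCoeff : Rr →+* Fv)) hu'
    simpa using this
  have hFinv : (∏ i ∈ range r, bTp ((r : ℤ) - i)) * (∏ i ∈ range r, bTp ((r : ℤ) - i))⁻¹ = 1 :=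
    PowerSeries.mul_inv_cancel _ (by rw [hconst]; exact hq)
  rw [ha, map_neg]
  refine ⟨((PowerSeries.C : Fv →+* Rr) (qfact r) * (PowerSeries.C : Fv →+* Rr) S ^ 2 -
      (1 - (PowerSeries.C : Fv →+* Rr) S * PowerSeries.X) * u) * (∏ i ∈ range r, bTp ((r : ℤ) - i))⁻¹, ?_⟩
  linear_combination (1 - (PowerSeries.C : Fv →+* Rr) S * PowerSeries.X) * hFinv -
    ((1 - (PowerSeries.C : Fv →+* Rr) S * PowerSeries.X) * (∏ i ∈ range r, bTp ((r : ℤ) - i))⁻¹) * hu'
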